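/- Let k be a field, Δ a simplicial complex, and f, g : Δ → ℝ monotonic functions with |f(σ) − g(σ)| ≤ δ for all σ ∈ Δ, where δ ≥ 0. With φ_t : V^f_t → V^g_{t+δ} and ψ_t : V^g_t → V^f_{t+δ} the basis-preserving interleaving maps, for every t ∈ ℝ the interleaving triangles commute: ψ_{t+δ} ∘ φ_t = v^f_{t, t+2δ} and φ_{t+δ} ∘ ψ_t = v^g_{t, t+2δ}. Hence the facet persistence modules V^f and V^g are δ-interleaved. -/

import Mathlib

/-- `σ` is a facet of `Γ`: a face that is maximal under inclusion. -/
def IsFacet {n : ℕ} (Γ : Set (Finset (Fin n))) (σ : Finset (Fin n)) : Prop :=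
  σ ∈ Γ ∧ ∀ τ ∈ Γ, σ ⊆ τ → σ = τ

/-- The sublevel complex `Δ^t_f = {σ ∈ Δ : f σ ≤ t}`. -/
def sublevel {n : ℕ} (Δ : Set (Finset (Fin n))) (f : Finset (Fin n) → ℝ) (t : ℝ) :
    Set (Finset (Fin n)) :=
  {σ | σ ∈ Δ ∧ f σ ≤ t}

/-- The `k`-vector space with basis the facets of `Γ`. -/
abbrev FacetSpace (k : Type*) [Field k] {n : ℕ} (Γ : Set (Finset (Fin n))) :=
  {σ : Finset (Fin n) // IsFacet Γ σ} →₀ k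

open Classical in
/-- The basis-preserving linear map between facet spaces: the basis vector of a facet `σ`
of `Γ₁` is sent to the same basis vector if `σ` is a facet of `Γ₂`, and to `0` otherwise.
It specializes both to the structure maps `v^f_{s,t}`, `v^g_{s,t}` of the facet persistence
modules and to the interleaving maps `φ_t`, `ψ_t`. -/
noncomputable def structMap (k : Type*) [Field k] {n : ℕ}
    (Γ₁ Γ₂ : Set (Finset (Fin n))) :
    FacetSpace k Γ₁ →ₗ[k] FacetSpace k Γ₂ :=
  Finsupp.lsum k fun σ =>
    if h : IsFacet Γ₂ σ.1 then Finsupp.lsingle ⟨σ.1, h⟩ else 0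

/-!
A facet of the larger complex that survives in a smaller one is still a facet there, so for
nested complexes `Γ₁ ⊆ Γ₂ ⊆ Γ₃` a facet of `Γ₁` that is still a facet of `Γ₃` was a facet of `Γ₂`
already: the basis-preserving maps compose. The bound `|f - g| ≤ δ` nests the sublevel
complexes as `Δ^t_f ⊆ Δ^{t+δ}_g ⊆ Δ^{t+2δ}_f`, and symmetrically with `f` and `g` exchanged.
-/

section

variable {n : ℕ}

theorem IsFacet.of_subset {Γ Γ' : Set (Finset (Fin n))} {σ : Finset (Fin n)}
    (h : IsFacet Γ σ) (hΓ : Γ' ⊆ Γ) (hσ : σ ∈ Γ') : IsFacet Γ' σ :=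
  ⟨hσ, fun τ hτ => h.2 τ (hΓ hτ)⟩

theorem sublevel_subset_sublevel_add {Δ : Set (Finset (Fin n))} {f g : Finset (Fin n) → ℝ}
    {δ : ℝ} (hfg : ∀ σ ∈ Δ, |f σ - g σ| ≤ δ) (t : ℝ) :
    sublevel Δ f t ⊆ sublevel Δ g (t + δ) := fun σ ⟨hσ, hfσ⟩ =>
  ⟨hσ, by linarith [(abs_sub_le_iff.mp (hfg σ hσ)).2]⟩

variable (k : Type*) [Field k]

open Classical in
theorem structMap_single (Γ₁ Γ₂ : Set (Finset (Fin n)))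
    (σ : {σ : Finset (Fin n) // IsFacet Γ₁ σ}) (c : k) :
    structMap k Γ₁ Γ₂ (Finsupp.single σ c)
      = if h : IsFacet Γ₂ σ.1 then Finsupp.single ⟨σ.1, h⟩ c else 0 := by
  simp only [structMap, Finsupp.lsum_single]
  split_ifs <;> simp [Finsupp.lsingle_apply]

theorem structMap_comp_of_subset {Γ₁ Γ₂ Γ₃ : Set (Finset (Fin n))}
    (h₁₂ : Γ₁ ⊆ Γ₂) (h₂₃ : Γ₂ ⊆ Γ₃) :
    (structMap k Γ₂ Γ₃).comp (structMap k Γ₁ Γ₂) = structMap k Γ₁ Γ₃ := by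
  refine Finsupp.lhom_ext fun σ c => ?_
  rw [LinearMap.comp_apply, structMap_single, structMap_single]
  by_cases h₃ : IsFacet Γ₃ σ.1
  · have h₂ : IsFacet Γ₂ σ.1 := h₃.of_subset h₂₃ (h₁₂ σ.2.1)
    rw [dif_pos h₂, dif_pos h₃, structMap_single, dif_pos h₃]
  · rw [dif_neg h₃]
    split_ifs
    · rw [structMap_single, dif_neg h₃]
    · exact map_zero _

end

theorem interleaving_triangles_commute_general (k : Type*) [Field k] (n : ℕ)
    (Δ : Set (Finset (Fin n)))
    (f g : Finset (Fin n) → ℝ)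
    (δ : ℝ)
    (hfg : ∀ σ ∈ Δ, |f σ - g σ| ≤ δ)
    (t : ℝ) :
    ((structMap k (sublevel Δ g (t + δ)) (sublevel Δ f (t + 2 * δ))).comp
        (structMap k (sublevel Δ f t) (sublevel Δ g (t + δ)))
      = structMap k (sublevel Δ f t) (sublevel Δ f (t + 2 * δ))) ∧
    ((structMap k (sublevel Δ f (t + δ)) (sublevel Δ g (t + 2 * δ))).comp
        (structMap k (sublevel Δ g t) (sublevel Δ f (t + δ)))
      = structMap k (sublevel Δ g t) (sublevel Δ g (t + 2 * δ))) := by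
  have hgf : ∀ σ ∈ Δ, |g σ - f σ| ≤ δ := fun σ hσ => abs_sub_comm (f σ) (g σ) ▸ hfg σ hσ
  have h2δ : t + 2 * δ = t + δ + δ := by ring
  rw [h2δ]
  exact ⟨structMap_comp_of_subset k (sublevel_subset_sublevel_add hfg t)
      (sublevel_subset_sublevel_add hgf (t + δ)),
    structMap_comp_of_subset k (sublevel_subset_sublevel_add hgf t)
      (sublevel_subset_sublevel_add hfg (t + δ))⟩

/-- **Interleaving triangles commute.** For monotonic `f, g` with `|f − g| ≤ δ` on `Δ` and
every `t`, one has `ψ_{t+δ} ∘ φ_t = v^f_{t,t+2δ}` and `φ_{t+δ} ∘ ψ_t = v^g_{t,t+2δ}`;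
hence the facet persistence modules `V^f` and `V^g` are `δ`-interleaved. -/
theorem interleaving_triangles_commute (k : Type*) [Field k] (n : ℕ)
    (Δ : Set (Finset (Fin n)))
    (hdown : ∀ F ∈ Δ, ∀ G : Finset (Fin n), G ⊆ F → G ∈ Δ)
    (hempty : (∅ : Finset (Fin n)) ∈ Δ)
    (f g : Finset (Fin n) → ℝ)
    (hmonof : ∀ τ ∈ Δ, ∀ σ ∈ Δ, τ ⊆ σ → f τ ≤ f σ)
    (hmonog : ∀ τ ∈ Δ, ∀ σ ∈ Δ, τ ⊆ σ → g τ ≤ g σ)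
    (δ : ℝ) (hδ : 0 ≤ δ)
    (hfg : ∀ σ ∈ Δ, |f σ - g σ| ≤ δ)
    (t : ℝ) :
    ((structMap k (sublevel Δ g (t + δ)) (sublevel Δ f (t + 2 * δ))).comp
        (structMap k (sublevel Δ f t) (sublevel Δ g (t + δ)))
      = structMap k (sublevel Δ f t) (sublevel Δ f (t + 2 * δ))) ∧
    ((structMap k (sublevel Δ f (t + δ)) (sublevel Δ g (t + 2 * δ))).comp
        (structMap k (sublevel Δ g t) (sublevel Δ f (t + δ)))
      = structMap k (sublevel Δ g t) (sublevel Δ g (t + 2 * δ))) :=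
  interleaving_triangles_commute_general k n Δ f g δ hfg t
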